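/- arXiv:2603.00677 — 2 statements merged into one kernel-verified Lean document; each statement's English description precedes it below -/
import Mathlib

section
/- Let V be a finite vertex set, G the complete simple graph on V with face poset X_G = V ⊕ E, and let W, W' : V → V → ℝ satisfy ‖W − W'‖_∞ ≤ ε for some ε ≥ 0. Then for every λ ∈ ℝ: every equivalence class of the equivalence relation generated by A_{λ+ε}(W) is contained in some equivalence class of the equivalence relation generated by A_λ(W'), and every equivalence class of the equivalence relation generated by A_λ(W') is contained in some equivalence class of the equivalence relation generated by A_{λ−ε}(W). -/
/-- The active merge relation at threshold `lam` on the face poset of the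
complete graph on `V`: a vertex `i` is related to the edge `s(i,j)` whenever
`W i j > lam` (taking both orientations into account via the symmetry of
`s(i,j)`). -/
def mergeRel {V : Type*} (W : V → V → ℝ) (lam : ℝ)
    (x y : V ⊕ ((⊤ : SimpleGraph V).edgeSet)) : Prop :=
  ∃ (i j : V) (h : s(i, j) ∈ (⊤ : SimpleGraph V).edgeSet),
    W i j > lam ∧ x = Sum.inl i ∧ y = Sum.inr ⟨s(i, j), h⟩

section MergeRel

variable {V : Type*} {W W' : V → V → ℝ} {l l' : ℝ}

theorem mergeRel_mono (hW : ∀ i j, l < W i j → l' < W' i j)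
    {x y : V ⊕ ((⊤ : SimpleGraph V).edgeSet)} :
    mergeRel W l x y → mergeRel W' l' x y := by
  rintro ⟨i, j, hij, hgt, rfl, rfl⟩
  exact ⟨i, j, hij, hW i j hgt, rfl, rfl⟩

theorem eqvGen_mergeRel_mono (hW : ∀ i j, l < W i j → l' < W' i j)
    {x y : V ⊕ ((⊤ : SimpleGraph V).edgeSet)} :
    Relation.EqvGen (mergeRel W l) x y → Relation.EqvGen (mergeRel W' l') x y :=
  Relation.EqvGen.mono (fun _ _ => mergeRel_mono hW) x y

end MergeRel

theorem multivector_field_sandwich_general {V : Type*}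
    (W W' : V → V → ℝ) (ε : ℝ)
    (h : ∀ i j : V, |W i j - W' i j| ≤ ε) (lam : ℝ) :
    (∀ x : V ⊕ ((⊤ : SimpleGraph V).edgeSet),
      ∃ z, {y | Relation.EqvGen (mergeRel W (lam + ε)) x y} ⊆
        {y | Relation.EqvGen (mergeRel W' lam) z y}) ∧
    (∀ x : V ⊕ ((⊤ : SimpleGraph V).edgeSet),
      ∃ z, {y | Relation.EqvGen (mergeRel W' lam) x y} ⊆
        {y | Relation.EqvGen (mergeRel W (lam - ε)) z y}) := by
  have hW'_of_W : ∀ i j, lam + ε < W i j → lam < W' i j := fun i j hij => by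
    linarith [(abs_le.mp (h i j)).2]
  have hW_of_W' : ∀ i j, lam < W' i j → lam - ε < W i j := fun i j hij => by
    linarith [(abs_le.mp (h i j)).1]
  exact ⟨fun x => ⟨x, fun _ => eqvGen_mergeRel_mono hW'_of_W⟩,
    fun x => ⟨x, fun _ => eqvGen_mergeRel_mono hW_of_W'⟩⟩

/-- Filtration stability: if `‖W − W'‖_∞ ≤ ε`, then for every threshold `lam`
every equivalence class of the equivalence relation generated by the active
merge relation for `W` at `lam + ε` is contained in some equivalence class of
the one for `W'` at `lam`, and every equivalence class for `W'` at `lam` is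
contained in some equivalence class for `W` at `lam − ε`. -/
theorem multivector_field_sandwich {V : Type*} [Fintype V] [DecidableEq V]
    (W W' : V → V → ℝ) (ε : ℝ) (hε : 0 ≤ ε)
    (h : ∀ i j : V, |W i j - W' i j| ≤ ε) (lam : ℝ) :
    (∀ x : V ⊕ ((⊤ : SimpleGraph V).edgeSet),
      ∃ z, {y | Relation.EqvGen (mergeRel W (lam + ε)) x y} ⊆
        {y | Relation.EqvGen (mergeRel W' lam) z y}) ∧
    (∀ x : V ⊕ ((⊤ : SimpleGraph V).edgeSet),
      ∃ z, {y | Relation.EqvGen (mergeRel W' lam) x y} ⊆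
        {y | Relation.EqvGen (mergeRel W (lam - ε)) z y}) :=
  multivector_field_sandwich_general W W' ε h lam
end

section
/- Let V be a finite vertex set, G the complete simple graph on V with face poset X_G = V ⊕ E equipped with its Alexandroff topology, and let W, W' : V → V → ℝ satisfy ‖W − W'‖_∞ ≤ ε for some ε ≥ 0. Then for every λ ∈ ℝ: every strongly connected component of the induced dynamic relation Π of the multivector field 𝒱_{λ+ε}(W) is contained in some strongly connected component of Π of 𝒱_λ(W'), and every strongly connected component of Π of 𝒱_λ(W') is contained in some strongly connected component of Π of 𝒱_{λ−ε}(W). -/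
/-- The face order on `V ⊕ E` of a simple graph: a vertex is below each edge
it is an endpoint of, together with reflexivity. -/
def faceLe {V : Type*} (G : SimpleGraph V) :
    (V ⊕ G.edgeSet) → (V ⊕ G.edgeSet) → Prop
  | Sum.inl v, Sum.inl w => v = w
  | Sum.inl v, Sum.inr e => v ∈ (e : Sym2 V)
  | Sum.inr _, Sum.inl _ => False
  | Sum.inr e, Sum.inr f => e = f

/-- The Alexandroff topology associated with a relation `le` on `X`:
the open sets are exactly the upper sets with respect to `le`. -/
def alexTop (X : Type*) (le : X → X → Prop) : TopologicalSpace X where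
  IsOpen s := ∀ ⦃a b : X⦄, le a b → a ∈ s → b ∈ s
  isOpen_univ := fun _ _ _ _ => trivial
  isOpen_inter := fun _ _ hs ht _ _ hab hmem => ⟨hs hab hmem.1, ht hab hmem.2⟩
  isOpen_sUnion := fun S hS a b hab hmem => by
    obtain ⟨u, huS, hau⟩ := hmem
    exact ⟨u, huS, hS u huS hab hau⟩

/-- The induced dynamic relation of a partition (given as an equivalence
relation) on a space with topology `t`: `x` is related to `y` iff `y` belongs
to the block of `x` or to its closure. -/
def dynRel {X : Type*} (t : TopologicalSpace X) (P : Setoid X) (x y : X) : Prop :=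
  y ∈ {z | P x z} ∪ @closure X t {z | P x z}

/-- The strongly connected component of `x` for a relation `r`: the set of
points `y` mutually reachable from `x` via the reflexive-transitive closure. -/
def scc {X : Type*} (r : X → X → Prop) (x : X) : Set X :=
  {y | Relation.ReflTransGen r x y ∧ Relation.ReflTransGen r y x}

/-- The graph multivector field at threshold `lam`, as the equivalence relation
generated by the active merge relation. -/
def mvf {V : Type*} (W : V → V → ℝ) (lam : ℝ) :
    Setoid (V ⊕ ((⊤ : SimpleGraph V).edgeSet)) :=
  Relation.EqvGen.setoid (mergeRel W lam)

/-! A merge active at threshold `lam + ε` for `W` is active at `lam` for `W'`, and one active at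
`lam` for `W'` is active at `lam - ε` for `W`. So the multivector fields coarsen along
`𝒱_{λ+ε}(W), 𝒱_λ(W'), 𝒱_{λ-ε}(W)`; a coarser partition has larger blocks and closures of
blocks, hence a larger induced dynamic relation, and every strongly connected component lies in
the component of the same point for the coarser field. -/

lemma scc_mono {X : Type*} {r r' : X → X → Prop} (hrr : r ≤ r') (x : X) :
    scc r x ⊆ scc r' x := fun _ hy =>
  ⟨Relation.ReflTransGen.mono hrr _ _ hy.1, Relation.ReflTransGen.mono hrr _ _ hy.2⟩

lemma dynRel_mono {X : Type*} (t : TopologicalSpace X) {P Q : Setoid X} (hPQ : P ≤ Q) :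
    dynRel t P ≤ dynRel t Q := fun _ _ hab =>
  Or.imp (fun hb => hPQ hb) (fun hb => closure_mono (fun _ hz => hPQ hz) hb) hab

lemma mergeRel_mono_s16 {V : Type*} {W W' : V → V → ℝ} {lam lam' : ℝ}
    (hm : ∀ i j, lam < W i j → lam' < W' i j) : mergeRel W lam ≤ mergeRel W' lam' :=
  fun _ _ ⟨i, j, he, hgt, hx, hy⟩ => ⟨i, j, he, hm i j hgt, hx, hy⟩

lemma mvf_mono {V : Type*} {W W' : V → V → ℝ} {lam lam' : ℝ}
    (hm : ∀ i j, lam < W i j → lam' < W' i j) : mvf W lam ≤ mvf W' lam' := fun _ _ hab =>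
  Relation.EqvGen.mono (mergeRel_mono_s16 hm) _ _ hab

lemma scc_dynRel_mvf_subset {V : Type*} (t : TopologicalSpace (V ⊕ (⊤ : SimpleGraph V).edgeSet))
    {W W' : V → V → ℝ} {lam lam' : ℝ} (hm : ∀ i j, lam < W i j → lam' < W' i j)
    (x : V ⊕ (⊤ : SimpleGraph V).edgeSet) :
    scc (dynRel t (mvf W lam)) x ⊆ scc (dynRel t (mvf W' lam')) x :=
  scc_mono (dynRel_mono t (mvf_mono hm)) x

theorem morse_sets_sandwich_general {V : Type*}
    (W W' : V → V → ℝ) (ε : ℝ)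
    (h : ∀ i j : V, |W i j - W' i j| ≤ ε) (lam : ℝ) :
    (∀ x : V ⊕ ((⊤ : SimpleGraph V).edgeSet),
      ∃ z, scc (dynRel (alexTop _ (faceLe (⊤ : SimpleGraph V))) (mvf W (lam + ε))) x ⊆
        scc (dynRel (alexTop _ (faceLe (⊤ : SimpleGraph V))) (mvf W' lam)) z) ∧
    (∀ x : V ⊕ ((⊤ : SimpleGraph V).edgeSet),
      ∃ z, scc (dynRel (alexTop _ (faceLe (⊤ : SimpleGraph V))) (mvf W' lam)) x ⊆
        scc (dynRel (alexTop _ (faceLe (⊤ : SimpleGraph V))) (mvf W (lam - ε))) z) := by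
  have hW := fun i j => abs_sub_le_iff.1 (h i j)
  refine ⟨fun x => ⟨x, scc_dynRel_mvf_subset _ (fun i j hij => ?_) x⟩,
    fun x => ⟨x, scc_dynRel_mvf_subset _ (fun i j hij => ?_) x⟩⟩
  · linarith [hW i j]
  · linarith [hW i j]

/-- Stability of Morse decompositions: if `‖W − W'‖_∞ ≤ ε`, then for every
threshold `lam`, every strongly connected component of the induced dynamic
relation of the multivector field of `W` at `lam + ε` is contained in some
strongly connected component of the one of `W'` at `lam`, and every strongly
connected component for `W'` at `lam` is contained in some strongly connected
component for `W` at `lam − ε`. -/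
theorem morse_sets_sandwich {V : Type*} [Fintype V] [DecidableEq V]
    (W W' : V → V → ℝ) (ε : ℝ) (hε : 0 ≤ ε)
    (h : ∀ i j : V, |W i j - W' i j| ≤ ε) (lam : ℝ) :
    (∀ x : V ⊕ ((⊤ : SimpleGraph V).edgeSet),
      ∃ z, scc (dynRel (alexTop _ (faceLe (⊤ : SimpleGraph V))) (mvf W (lam + ε))) x ⊆
        scc (dynRel (alexTop _ (faceLe (⊤ : SimpleGraph V))) (mvf W' lam)) z) ∧
    (∀ x : V ⊕ ((⊤ : SimpleGraph V).edgeSet),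
      ∃ z, scc (dynRel (alexTop _ (faceLe (⊤ : SimpleGraph V))) (mvf W' lam)) x ⊆
        scc (dynRel (alexTop _ (faceLe (⊤ : SimpleGraph V))) (mvf W (lam - ε))) z) :=
  morse_sets_sandwich_general W W' ε h lam
end
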